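/- Let ψ_0, ψ_1, φ_0, φ_1 be unit vectors in C^2 with ψ_0 ⊥ ψ_1 and φ_0 ⊥ φ_1. If the superposition (1/2)(e_0 ⊗ (ψ_0 + φ_0) + e_1 ⊗ (ψ_1 + φ_1)) is a unit vector whose two components (ψ_0+φ_0)/√2 and (ψ_1+φ_1)/√2 are orthonormal, then the operator U = |φ_0⟩⟨ψ_0| + |φ_1⟩⟨ψ_1| satisfies U + U† = 0 (U is anti-Hermitian); and conversely, if U is anti-Hermitian then those two components are orthonormal. -/

import Mathlib

open scoped Matrix

noncomputable section

abbrev Qubit := EuclideanSpace ℂ (Fin 2)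

def ketBra (a b : Qubit) : Matrix (Fin 2) (Fin 2) ℂ :=
  Matrix.vecMulVec a (star (b : Fin 2 → ℂ))

/-!
Write `vᵢ = (ψᵢ + φᵢ)/√2`. Expanding with `ψ` and `φ` orthonormal,
`⟪vᵢ, vⱼ⟫ = δᵢⱼ + (⟪ψᵢ, φⱼ⟫ + ⟪φᵢ, ψⱼ⟫)/2`, so `v` is orthonormal iff
`⟪ψᵢ, φⱼ⟫ + ⟪φᵢ, ψⱼ⟫ = 0` for all `i, j`. On the other side `U ψⱼ = φⱼ`, so the matrix
coefficients of `U + U†` in the orthonormal basis `ψ` are exactly these same sums.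
-/

open ContinuousLinearMap InnerProductSpace
open scoped InnerProductSpace

section

variable {𝕜 E ι : Type*} [RCLike 𝕜] [NormedAddCommGroup E] [InnerProductSpace 𝕜 E]

theorem orthonormal_smul_add_iff {ψ φ : ι → E} (hψ : Orthonormal 𝕜 ψ) (hφ : Orthonormal 𝕜 φ)
    {c : 𝕜} (hc : starRingEnd 𝕜 c * c = 2⁻¹) :
    Orthonormal 𝕜 (fun i ↦ c • (ψ i + φ i)) ↔ ∀ i j, ⟪ψ i, φ j⟫_𝕜 + ⟪φ i, ψ j⟫_𝕜 = 0 := by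
  classical
  have hinner : ∀ i j, ⟪c • (ψ i + φ i), c • (ψ j + φ j)⟫_𝕜
      = (if i = j then 1 else 0) + 2⁻¹ * (⟪ψ i, φ j⟫_𝕜 + ⟪φ i, ψ j⟫_𝕜) := by
    intro i j
    rw [inner_smul_left, inner_smul_right, ← mul_assoc, hc, inner_add_left, inner_add_right,
      inner_add_right, orthonormal_iff_ite.mp hψ, orthonormal_iff_ite.mp hφ]
    split_ifs <;> ring
  simp only [orthonormal_iff_ite, hinner, add_eq_left, mul_eq_zero, inv_eq_zero,
    OfNat.ofNat_ne_zero, false_or]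

theorem Orthonormal.sum_rankOne_apply [Fintype ι] {ψ : ι → E} (hψ : Orthonormal 𝕜 ψ)
    (φ : ι → E) (j : ι) : (∑ k, rankOne 𝕜 (φ k) (ψ k)) (ψ j) = φ j := by
  classical
  simp [rankOne_apply, orthonormal_iff_ite.mp hψ, ite_smul]

theorem OrthonormalBasis.eq_zero_iff_inner [Fintype ι] (b : OrthonormalBasis ι 𝕜 E)
    (T : E →L[𝕜] E) : T = 0 ↔ ∀ i j, ⟪b i, T (b j)⟫_𝕜 = 0 := by
  refine ⟨fun h ↦ by simp [h], fun h ↦ ?_⟩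
  refine ContinuousLinearMap.coe_injective (b.toBasis.ext fun j ↦ ?_)
  exact ext_inner_left_basis b.toBasis fun i ↦ by simpa using h i j

theorem OrthonormalBasis.add_adjoint_eq_zero_iff [Fintype ι] [CompleteSpace E]
    (b : OrthonormalBasis ι 𝕜 E) (T : E →L[𝕜] E) :
    T + adjoint T = 0 ↔ ∀ i j, ⟪b i, T (b j)⟫_𝕜 + ⟪T (b i), b j⟫_𝕜 = 0 := by
  simp only [b.eq_zero_iff_inner, add_apply, inner_add_right, adjoint_inner_right]

theorem Matrix.add_conjTranspose_eq_zero_iff {n : Type*} [Fintype n] [DecidableEq n]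
    (A : Matrix n n 𝕜) :
    A + Aᴴ = 0 ↔
      toEuclideanCLM (n := n) (𝕜 := 𝕜) A + adjoint (toEuclideanCLM (n := n) (𝕜 := 𝕜) A) = 0 := by
  rw [← star_eq_adjoint, ← map_star, ← map_add, EmbeddingLike.map_eq_zero_iff,
    star_eq_conjTranspose]

end

theorem toEuclideanCLM_ketBra (a b : Qubit) :
    Matrix.toEuclideanCLM (n := Fin 2) (𝕜 := ℂ) (ketBra a b) = rankOne ℂ a b := by
  refine ContinuousLinearMap.coe_injective ?_
  rw [Matrix.coe_toEuclideanCLM_eq_toEuclideanLin, eq_comm, ← LinearEquiv.symm_apply_eq,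
    symm_toEuclideanLin_rankOne]
  rfl

theorem stmt_4 (ψ0 ψ1 φ0 φ1 : Qubit)
    (hψ : Orthonormal ℂ ![ψ0, ψ1]) (hφ : Orthonormal ℂ ![φ0, φ1]) :
    Orthonormal ℂ
        ![((Real.sqrt 2 : ℂ))⁻¹ • (ψ0 + φ0), ((Real.sqrt 2 : ℂ))⁻¹ • (ψ1 + φ1)]
      ↔ (ketBra φ0 ψ0 + ketBra φ1 ψ1) + (ketBra φ0 ψ0 + ketBra φ1 ψ1)ᴴ = 0 := by
  set ψ : Fin 2 → Qubit := ![ψ0, ψ1]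
  set φ : Fin 2 → Qubit := ![φ0, φ1]
  let b := OrthonormalBasis.mk hψ
    (hψ.linearIndependent.span_eq_top_of_card_eq_finrank (by simp)).ge
  have hc : starRingEnd ℂ (Real.sqrt 2 : ℂ)⁻¹ * (Real.sqrt 2 : ℂ)⁻¹ = 2⁻¹ := by
    rw [map_inv₀, Complex.conj_ofReal, ← mul_inv, ← Complex.ofReal_mul,
      Real.mul_self_sqrt zero_le_two, Complex.ofReal_ofNat]
  have hv : ![((Real.sqrt 2 : ℂ))⁻¹ • (ψ0 + φ0), ((Real.sqrt 2 : ℂ))⁻¹ • (ψ1 + φ1)]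
      = fun i ↦ ((Real.sqrt 2 : ℂ))⁻¹ • (ψ i + φ i) := by
    ext1 i; fin_cases i <;> rfl
  have hU : Matrix.toEuclideanCLM (n := Fin 2) (𝕜 := ℂ) (ketBra φ0 ψ0 + ketBra φ1 ψ1)
      = ∑ k, rankOne ℂ (φ k) (ψ k) := by
    simp [toEuclideanCLM_ketBra, Fin.sum_univ_two, φ, ψ]
  rw [hv, orthonormal_smul_add_iff hψ hφ hc, Matrix.add_conjTranspose_eq_zero_iff, hU,
    b.add_adjoint_eq_zero_iff]
  simp only [b, OrthonormalBasis.coe_mk, hψ.sum_rankOne_apply]
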